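/- arXiv:1810.06583 — 2 statements merged into one kernel-verified Lean document; each statement's English description precedes it below -/
import Mathlib

section
/- Let Z, V, Y be real-valued random variables and f : ℝ × ℝ → ℝ a function such that (1) f(z, v) is non-increasing in z for every fixed v, (2) Z and V are conditionally independent given Y, and (3) E[Z | Y] = E[Z] almost surely. Then E[Z · f(Z, V)] ≤ E[Z] · E[f(Z, V)]. -/
open MeasureTheory ProbabilityTheory

/-!
Given `Y`, the variables `Z` and `V` are independent, so by Fubini the conditional expectation of
`Z f(Z,V)` is an average over `v` of `∫ z f(z,v) dρ(z)`, with `ρ` the conditional law of `Z`.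
Since `f(·,v)` is non-increasing, Chebyshev's integral inequality bounds this by
`E[Z | Y] ∫ f(z,v) dρ(z)`, and `E[Z | Y] = E[Z]` is constant, so integrating out `Y` concludes.
-/

theorem integral_mul_le_integral_mul_integral_of_antivary {α : Type*} [MeasurableSpace α]
    {ρ : Measure α} [IsProbabilityMeasure ρ] {g h : α → ℝ} (hgh : Antivary h g)
    (hg : Integrable g ρ) (hh : Integrable h ρ) (hgh_int : Integrable (fun x => g x * h x) ρ) :
    ∫ x, g x * h x ∂ρ ≤ (∫ x, g x ∂ρ) * ∫ x, h x ∂ρ := by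
  -- integrate the rearrangement inequality `g x h x + g y h y ≤ g x h y + h x g y` over `ρ ⊗ ρ`
  have hdiag : Integrable (fun p : α × α => g p.1 * h p.1 + g p.2 * h p.2) (ρ.prod ρ) :=
    (hgh_int.comp_fst ρ).add (hgh_int.comp_snd ρ)
  have hcross : Integrable (fun p : α × α => g p.1 * h p.2 + h p.1 * g p.2) (ρ.prod ρ) :=
    (hg.mul_prod hh).add (hh.mul_prod hg)
  have key := integral_mono hdiag hcross fun p => by
    have := hgh.mul_add_mul_le_mul_add_mul p.1 p.2
    dsimp only
    linarith
  rw [integral_add (hgh_int.comp_fst ρ) (hgh_int.comp_snd ρ),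
    integral_add (hg.mul_prod hh) (hh.mul_prod hg), integral_fun_fst (fun x => g x * h x),
    integral_fun_snd (fun x => g x * h x), integral_prod_mul, integral_prod_mul] at key
  simp only [probReal_univ, one_smul] at key
  linarith

theorem ProbabilityTheory.IndepFun.integral_mul_le_of_antitone {Ω β : Type*}
    [MeasurableSpace Ω] [MeasurableSpace β] {ν : Measure Ω} [IsProbabilityMeasure ν]
    {Z : Ω → ℝ} {V : Ω → β} {f : ℝ → β → ℝ} (hZ : AEMeasurable Z ν) (hV : AEMeasurable V ν)
    (hf : Measurable fun p : ℝ × β => f p.1 p.2) (hmono : ∀ v, Antitone fun z => f z v)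
    (hind : IndepFun Z V ν) (hZint : Integrable Z ν)
    (hfint : Integrable (fun ω => f (Z ω) (V ω)) ν)
    (hZfint : Integrable (fun ω => Z ω * f (Z ω) (V ω)) ν) :
    ∫ ω, Z ω * f (Z ω) (V ω) ∂ν ≤ (∫ ω, Z ω ∂ν) * ∫ ω, f (Z ω) (V ω) ∂ν := by
  set ρ := ν.map Z
  set σ := ν.map V
  have : IsProbabilityMeasure ρ := Measure.isProbabilityMeasure_map hZ
  have hZV : AEMeasurable (fun ω => (Z ω, V ω)) ν := hZ.prodMk hV
  have hlaw : ν.map (fun ω => (Z ω, V ω)) = ρ.prod σ :=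
    (indepFun_iff_map_prod_eq_prod_map_map hZ hV).1 hind
  have hZf_meas : Measurable fun p : ℝ × β => p.1 * f p.1 p.2 := measurable_fst.mul hf
  have hZf_prod : Integrable (fun p : ℝ × β => p.1 * f p.1 p.2) (ρ.prod σ) := by
    rwa [← hlaw, integrable_map_measure hZf_meas.aestronglyMeasurable hZV]
  have hf_prod : Integrable (fun p : ℝ × β => f p.1 p.2) (ρ.prod σ) := by
    rwa [← hlaw, integrable_map_measure hf.aestronglyMeasurable hZV]
  have hmean : ∫ z, z ∂ρ = ∫ ω, Z ω ∂ν := integral_map hZ aestronglyMeasurable_id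
  have hidint : Integrable (fun z : ℝ => z) ρ :=
    (integrable_map_measure aestronglyMeasurable_id hZ).2 hZint
  calc ∫ ω, Z ω * f (Z ω) (V ω) ∂ν
      = ∫ v, ∫ z, z * f z v ∂ρ ∂σ := by
        rw [← integral_prod_symm _ hZf_prod, ← hlaw, integral_map hZV hZf_meas.aestronglyMeasurable]
    _ ≤ ∫ v, (∫ z, z ∂ρ) * ∫ z, f z v ∂ρ ∂σ := by
        refine integral_mono_ae hZf_prod.integral_prod_right
          (hf_prod.integral_prod_right.const_mul _) ?_
        filter_upwards [hZf_prod.prod_left_ae, hf_prod.prod_left_ae] with v hZfv hfv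
        exact integral_mul_le_integral_mul_integral_of_antivary
          (antivary_id_iff.2 (hmono v)) hidint hfv hZfv
    _ = (∫ ω, Z ω ∂ν) * ∫ ω, f (Z ω) (V ω) ∂ν := by
        rw [integral_const_mul, hmean, ← integral_prod_symm _ hf_prod, ← hlaw,
          integral_map hZV hf.aestronglyMeasurable]

theorem ProbabilityTheory.CondIndepFun.ae_indepFun_condExpKernel {Ω β γ : Type*}
    {m' : MeasurableSpace Ω} [mΩ : MeasurableSpace Ω] [StandardBorelSpace Ω] {hm' : m' ≤ mΩ}
    {μ : Measure Ω} [IsFiniteMeasure μ] [MeasurableSpace β] [MeasurableSpace γ]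
    [MeasurableSpace.CountableOrCountablyGenerated Ω (β × γ)] {X : Ω → β} {Y : Ω → γ}
    (hX : Measurable X) (hY : Measurable Y) (h : CondIndepFun m' hm' X Y μ) :
    ∀ᵐ ω ∂μ, IndepFun X Y (condExpKernel μ m' ω) := by
  have hlaw := (condIndepFun_iff_map_prod_eq_prod_map_map hX hY).1 h
  filter_upwards [ae_of_ae_trim hm' hlaw] with ω hω
  rw [indepFun_iff_map_prod_eq_prod_map_map hX.aemeasurable hY.aemeasurable]
  rwa [Kernel.prod_apply, Kernel.map_apply _ hX, Kernel.map_apply _ hY,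
    Kernel.map_apply _ (hX.prodMk hY)] at hω

theorem integral_integral_condExpKernel {Ω F : Type*} [NormedAddCommGroup F] [NormedSpace ℝ F]
    [CompleteSpace F] {m : MeasurableSpace Ω} [mΩ : MeasurableSpace Ω] [StandardBorelSpace Ω]
    {μ : Measure Ω} [IsFiniteMeasure μ] (hm : m ≤ mΩ) {f : Ω → F} (hf : Integrable f μ) :
    ∫ ω, ∫ x, f x ∂condExpKernel μ m ω ∂μ = ∫ ω, f ω ∂μ := by
  rw [← integral_congr_ae (condExp_ae_eq_integral_condExpKernel hm hf), integral_condExp hm]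

theorem ProbabilityTheory.CondIndepFun.integral_mul_le_of_antitone {Ω β : Type*}
    {m' : MeasurableSpace Ω} [mΩ : MeasurableSpace Ω] [StandardBorelSpace Ω] {hm' : m' ≤ mΩ}
    {μ : Measure Ω} [IsProbabilityMeasure μ] [MeasurableSpace β]
    [MeasurableSpace.CountableOrCountablyGenerated Ω (ℝ × β)]
    {Z : Ω → ℝ} {V : Ω → β} {f : ℝ → β → ℝ} (hZ : Measurable Z) (hV : Measurable V)
    (hf : Measurable fun p : ℝ × β => f p.1 p.2) (hmono : ∀ v, Antitone fun z => f z v)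
    (hind : CondIndepFun m' hm' Z V μ) (hcond : μ[Z | m'] =ᵐ[μ] fun _ => ∫ ω, Z ω ∂μ)
    (hZint : Integrable Z μ) (hfint : Integrable (fun ω => f (Z ω) (V ω)) μ)
    (hZfint : Integrable (fun ω => Z ω * f (Z ω) (V ω)) μ) :
    ∫ ω, Z ω * f (Z ω) (V ω) ∂μ ≤ (∫ ω, Z ω ∂μ) * ∫ ω, f (Z ω) (V ω) ∂μ := by
  have hmean : ∀ᵐ ω ∂μ, ∫ x, Z x ∂condExpKernel μ m' ω = ∫ x, Z x ∂μ := by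
    filter_upwards [condExp_ae_eq_integral_condExpKernel hm' hZint, hcond] with ω hZω hcondω
    rw [← hZω, hcondω]
  have hpointwise : ∀ᵐ ω ∂μ, ∫ x, Z x * f (Z x) (V x) ∂condExpKernel μ m' ω
      ≤ (∫ x, Z x ∂μ) * ∫ x, f (Z x) (V x) ∂condExpKernel μ m' ω := by
    filter_upwards [hind.ae_indepFun_condExpKernel hZ hV, hmean, hZint.condExpKernel_ae,
      hfint.condExpKernel_ae, hZfint.condExpKernel_ae] with ω hindω hmeanω hZω hfω hZfω
    rw [← hmeanω]
    exact hindω.integral_mul_le_of_antitone hZ.aemeasurable hV.aemeasurable hf hmono hZω hfω hZfω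
  calc ∫ ω, Z ω * f (Z ω) (V ω) ∂μ
      = ∫ ω, ∫ x, Z x * f (Z x) (V x) ∂condExpKernel μ m' ω ∂μ :=
        (integral_integral_condExpKernel hm' hZfint).symm
    _ ≤ ∫ ω, (∫ x, Z x ∂μ) * ∫ x, f (Z x) (V x) ∂condExpKernel μ m' ω ∂μ :=
        integral_mono_ae hZfint.integral_condExpKernel
          (hfint.integral_condExpKernel.const_mul _) hpointwise
    _ = (∫ ω, Z ω ∂μ) * ∫ ω, f (Z ω) (V ω) ∂μ := by
        rw [integral_const_mul, integral_integral_condExpKernel hm' hfint]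

/-- Covariance-type upper bound: if `f(z,v)` is non-increasing in `z`, `Z` and `V` are
conditionally independent given `Y`, and `E[Z | Y] = E[Z]` a.s., then
`E[Z ⬝ f(Z,V)] ≤ E[Z] ⬝ E[f(Z,V)]`. -/
theorem stmt_0
    {Ω : Type*} [MeasurableSpace Ω] [StandardBorelSpace Ω]
    (μ : Measure Ω) [IsProbabilityMeasure μ]
    (Z V Y : Ω → ℝ) (f : ℝ → ℝ → ℝ)
    (hZ : Measurable Z) (hV : Measurable V) (hY : Measurable Y)
    (hf : Measurable fun p : ℝ × ℝ => f p.1 p.2)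
    (hmono : ∀ v : ℝ, Antitone fun z => f z v)
    (hindep : CondIndepFun (MeasurableSpace.comap Y inferInstance)
      (hY.comap_le) Z V μ)
    (hcond : μ[Z | MeasurableSpace.comap Y inferInstance]
      =ᵐ[μ] fun _ => ∫ ω, Z ω ∂μ)
    (hZint : Integrable Z μ)
    (hfint : Integrable (fun ω => f (Z ω) (V ω)) μ)
    (hZfint : Integrable (fun ω => Z ω * f (Z ω) (V ω)) μ) :
    ∫ ω, Z ω * f (Z ω) (V ω) ∂μ ≤ (∫ ω, Z ω ∂μ) * ∫ ω, f (Z ω) (V ω) ∂μ :=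
  hindep.integral_mul_le_of_antitone hZ hV hf hmono hcond hZint hfint hZfint
end

section
/- Let g : ℝ → ℝ be non-decreasing, differentiable and convex, let w, x ∈ ℝ^d, y ∈ {−1, +1}, ε ≥ 0, and define L_y(v) = g(−y⟨w, v⟩). Then g(−y⟨w, x⟩) + max over x' with ‖x' − x‖_∞ ≤ ε of ‖IG^{L_y}(x, x')‖₁ equals max over δ with ‖δ‖_∞ ≤ ε of g(−y⟨w, x + δ⟩), i.e., the natural loss plus the worst-case ℓ₁-norm of the IG of the loss equals the ℓ_∞(ε)-adversarial loss. -/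
open Finset intervalIntegral

/-- Natural loss plus the worst-case ℓ₁-norm of the IG of the loss equals the
ℓ∞(ε)-adversarial loss: both maxima exist and are equal. -/
theorem stmt_6 {d : ℕ} (g : ℝ → ℝ) (hg_mono : Monotone g)
    (hg_diff : Differentiable ℝ g) (hg_cvx : ConvexOn ℝ Set.univ g)
    (w x : Fin d → ℝ) (y ε : ℝ) (hy : y = 1 ∨ y = -1) (hε : 0 ≤ ε)
    (L : (Fin d → ℝ) → ℝ) (hL : ∀ v, L v = g (-(y * ∑ j, w j * v j))) :
    ∃ M : ℝ,
      IsGreatest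
        {t : ℝ | ∃ x' : Fin d → ℝ, (∀ i, |x' i - x i| ≤ ε) ∧
          t = L x + ∑ i, |(x' i - x i) *
            ∫ α in (0:ℝ)..1,
              fderiv ℝ L (fun j => x j + α * (x' j - x j)) (Pi.single i 1)|} M ∧
      IsGreatest
        {t : ℝ | ∃ δ : Fin d → ℝ, (∀ i, |δ i| ≤ ε) ∧
          t = L (fun j => x j + δ j)} M := by
  classical
  have hLe : L = fun v => g (-(y * ∑ j, w j * v j)) := funext hL
  subst hLe
  have hy2 : y * y = 1 := by rcases hy with rfl | rfl <;> norm_num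
  have hyabs : |y| = 1 := by rcases hy with rfl | rfl <;> norm_num
  set S := ∑ i, |w i| with hSdef
  have hS0 : (0:ℝ) ≤ S := Finset.sum_nonneg fun i _ => abs_nonneg _
  set s₀ := -(y * ∑ j, w j * x j) with hs₀
  -- derivative of g is monotone and nonnegative
  have hdm : Monotone (deriv g) := by
    have := hg_cvx.monotoneOn_deriv (fun t _ => hg_diff t)
    rwa [← monotoneOn_univ]
  have hd0 : ∀ t, 0 ≤ deriv g t := by
    intro t
    have h := hg_cvx.slope_le_deriv (Set.mem_univ (t-1)) (Set.mem_univ t)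
      (by linarith) (hg_diff t)
    have h0 : (0:ℝ) ≤ slope g (t-1) t := by
      rw [slope_def_field]
      have := hg_mono (show t-1 ≤ t by linarith)
      have h2 : t - (t-1) = 1 := by ring
      rw [h2]
      simp
      linarith
    linarith
  -- integrability
  have integ : ∀ b : ℝ,
      IntervalIntegrable (fun α => deriv g (s₀ + α * b)) MeasureTheory.volume 0 1 := by
    intro b
    rcases le_or_gt 0 b with hb | hb
    · exact (hdm.comp (fun a₁ a₂ h => by simp only; nlinarith :
        Monotone fun α : ℝ => s₀ + α * b)).intervalIntegrable
    · exact (hdm.comp_antitone (fun a₁ a₂ h => by simp only; nlinarith :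
        Antitone fun α : ℝ => s₀ + α * b)).intervalIntegrable
  -- fundamental theorem of calculus
  have ftc : ∀ b : ℝ, (∫ α in (0:ℝ)..1, deriv g (s₀ + α * b)) * b = g (s₀ + b) - g s₀ := by
    intro b
    have hderiv : ∀ α ∈ Set.uIcc (0:ℝ) 1, HasDerivAt (fun α => g (s₀ + α * b))
        (deriv g (s₀ + α * b) * b) α := by
      intro α _
      have hin : HasDerivAt (fun α : ℝ => s₀ + α * b) b α := by
        simpa using (hasDerivAt_mul_const b (x := α)).const_add s₀
      exact (hg_diff (s₀ + α * b)).hasDerivAt.comp α hin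
    have hint : IntervalIntegrable (fun α => deriv g (s₀ + α * b) * b)
        MeasureTheory.volume 0 1 := (integ b).mul_const b
    have h := intervalIntegral.integral_eq_sub_of_hasDerivAt hderiv hint
    rw [intervalIntegral.integral_mul_const] at h
    simpa using h
  have Inonneg : ∀ b : ℝ, 0 ≤ ∫ α in (0:ℝ)..1, deriv g (s₀ + α * b) := fun b =>
    intervalIntegral.integral_nonneg (by norm_num) (fun u _ => hd0 _)
  -- key inequality
  have key : ∀ b c : ℝ, |b| ≤ c → c ≤ ε * S →
      (∫ α in (0:ℝ)..1, deriv g (s₀ + α * b)) * c ≤ g (s₀ + ε * S) - g s₀ := by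
    intro b c hbc hcS
    have hc0 : (0:ℝ) ≤ c := le_trans (abs_nonneg b) hbc
    have hIJ : (∫ α in (0:ℝ)..1, deriv g (s₀ + α * b))
        ≤ ∫ α in (0:ℝ)..1, deriv g (s₀ + α * c) := by
      apply intervalIntegral.integral_mono_on (by norm_num) (integ b) (integ c)
      intro α hα
      have hb_le : b ≤ c := le_trans (le_abs_self b) hbc
      exact hdm (by nlinarith [hα.1, hα.2] : s₀ + α * b ≤ s₀ + α * c)
    calc (∫ α in (0:ℝ)..1, deriv g (s₀ + α * b)) * c
        ≤ (∫ α in (0:ℝ)..1, deriv g (s₀ + α * c)) * c :=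
          mul_le_mul_of_nonneg_right hIJ hc0
      _ = g (s₀ + c) - g s₀ := ftc c
      _ ≤ g (s₀ + ε * S) - g s₀ := by
          have := hg_mono (show s₀ + c ≤ s₀ + ε * S by linarith)
          linarith
  -- fderiv of L
  set T : (Fin d → ℝ) →L[ℝ] ℝ :=
    (-y) • ∑ j : Fin d, (w j) • (ContinuousLinearMap.proj (R := ℝ) (φ := fun _ : Fin d => ℝ) j)
    with hTdef
  have hT : ∀ v, T v = -(y * ∑ j, w j * v j) := by
    intro v
    simp [hTdef, ContinuousLinearMap.sum_apply]
  have hfd : ∀ (v : Fin d → ℝ) (i : Fin d),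
      fderiv ℝ (fun v => g (-(y * ∑ j, w j * v j))) v (Pi.single i 1)
        = deriv g (-(y * ∑ j, w j * v j)) * (-(y * w i)) := by
    intro v i
    have hfun : (fun v => g (-(y * ∑ j, w j * v j))) = fun v => g (T v) := by
      funext v; rw [hT]
    have hfd' : HasFDerivAt (fun v => g (T v)) (deriv g (T v) • (T : (Fin d → ℝ) →L[ℝ] ℝ)) v :=
      (hg_diff (T v)).hasDerivAt.comp_hasFDerivAt v T.hasFDerivAt
    rw [hfun, hfd'.fderiv]
    have hsingle : T (Pi.single i 1) = -(y * w i) := by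
      rw [hT]
      simp [Pi.single_apply, mul_ite, Finset.sum_ite_eq']
    simp [hsingle, hT]
  -- linearity of the inner product
  have hsplit : ∀ (δ : Fin d → ℝ) (α : ℝ),
      -(y * ∑ j, w j * (x j + α * δ j)) = s₀ + α * -(y * ∑ j, w j * δ j) := by
    intro δ α
    have h1 : ∑ j, w j * (x j + α * δ j) = (∑ j, w j * x j) + α * ∑ j, w j * δ j := by
      rw [Finset.mul_sum, ← Finset.sum_add_distrib]
      exact Finset.sum_congr rfl fun j _ => by ring
    rw [h1, hs₀]; ring
  -- the IG sum in closed form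
  have hsum : ∀ x' : Fin d → ℝ,
      (∑ i, |(x' i - x i) * ∫ α in (0:ℝ)..1,
        fderiv ℝ (fun v => g (-(y * ∑ j, w j * v j)))
          (fun j => x j + α * (x' j - x j)) (Pi.single i 1)|)
      = (∫ α in (0:ℝ)..1, deriv g (s₀ + α * -(y * ∑ j, w j * (x' j - x j))))
          * (∑ i, |w i * (x' i - x i)|) := by
    intro x'
    rw [Finset.mul_sum]
    apply Finset.sum_congr rfl
    intro i _
    have hintg : ∀ α : ℝ,
        fderiv ℝ (fun v => g (-(y * ∑ j, w j * v j)))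
          (fun j => x j + α * (x' j - x j)) (Pi.single i 1)
        = deriv g (s₀ + α * -(y * ∑ j, w j * (x' j - x j))) * (-(y * w i)) := by
      intro α
      rw [hfd]
      congr 2
      exact hsplit (fun j => x' j - x j) α
    simp only [hintg]
    rw [intervalIntegral.integral_mul_const]
    rw [abs_mul, abs_mul, abs_of_nonneg (Inonneg _), abs_neg, abs_mul, hyabs, one_mul,
      abs_mul]
    ring
  -- value of L at perturbed points
  have hLval : ∀ δ : Fin d → ℝ,
      g (-(y * ∑ j, w j * (x j + δ j))) = g (s₀ + -(y * ∑ j, w j * δ j)) := by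
    intro δ
    congr 1
    have := hsplit δ 1
    simpa using this
  -- bound on b and c for admissible perturbations
  have hbc : ∀ δ : Fin d → ℝ, (∀ i, |δ i| ≤ ε) →
      |-(y * ∑ j, w j * δ j)| ≤ ∑ i, |w i * δ i| ∧ (∑ i, |w i * δ i|) ≤ ε * S := by
    intro δ hδ
    constructor
    · rw [abs_neg, abs_mul, hyabs, one_mul]
      exact Finset.abs_sum_le_sum_abs _ _
    · rw [hSdef, Finset.mul_sum]
      apply Finset.sum_le_sum
      intro i _
      rw [abs_mul]
      calc |w i| * |δ i| ≤ |w i| * ε := mul_le_mul_of_nonneg_left (hδ i) (abs_nonneg _)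
        _ = ε * |w i| := mul_comm _ _
  -- the optimal perturbation
  set δs : Fin d → ℝ := fun i => if 0 ≤ w i then -(y * ε) else y * ε with hδsdef
  have hδs_abs : ∀ i, |δs i| ≤ ε := by
    intro i
    have h0 : δs i = if 0 ≤ w i then -(y * ε) else y * ε := rfl
    rw [h0]
    split_ifs <;> simp [abs_mul, hyabs, abs_of_nonneg hε]
  have hδs_mul : ∀ i, w i * δs i = -(y * (ε * |w i|)) := by
    intro i
    have h0 : δs i = if 0 ≤ w i then -(y * ε) else y * ε := rfl
    rw [h0]
    split_ifs with h
    · rw [abs_of_nonneg h]; ring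
    · rw [abs_of_neg (not_le.mp h)]; ring
  have hδs_b : -(y * ∑ j, w j * δs j) = ε * S := by
    have h1 : ∑ j, w j * δs j = -(y * (ε * S)) := by
      calc ∑ j, w j * δs j = ∑ j, -(y * ε * |w j|) :=
            Finset.sum_congr rfl fun j _ => by rw [hδs_mul]; ring
        _ = -(y * (ε * S)) := by rw [hSdef, Finset.sum_neg_distrib, ← Finset.mul_sum]; ring_nf
    rw [h1]
    have h2 : -(y * -(y * (ε * S))) = y * y * (ε * S) := by ring
    rw [h2, hy2, one_mul]
  have hδs_c : (∑ i, |w i * δs i|) = ε * S := by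
    rw [hSdef, Finset.mul_sum]
    apply Finset.sum_congr rfl
    intro i _
    rw [hδs_mul, abs_neg, abs_mul, hyabs, one_mul, abs_mul, abs_of_nonneg hε, abs_abs]
  -- Main assembly
  have hLx : (fun v => g (-(y * ∑ j, w j * v j))) x = g s₀ := rfl
  refine ⟨g (s₀ + ε * S), ⟨⟨fun j => x j + δs j, ?_, ?_⟩, ?_⟩, ⟨δs, hδs_abs, ?_⟩, ?_⟩
  · intro i; simpa using hδs_abs i
  · -- membership in the IG set
    have hsum' := hsum (fun j => x j + δs j)
    simp only [add_sub_cancel_left] at hsum' ⊢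
    rw [hsum', hδs_b, hδs_c, ftc (ε * S), ← hs₀]
    ring
  · -- upper bound for the IG set
    rintro t ⟨x', hx', rfl⟩
    rw [hsum x', hLx]
    have h := hbc (fun j => x' j - x j) (fun i => hx' i)
    have hk := key _ _ h.1 h.2
    linarith
  · -- membership in the adversarial set
    show g (s₀ + ε * S) = g (-(y * ∑ j, w j * (x j + δs j)))
    rw [hLval δs, hδs_b]
  · -- upper bound for the adversarial set
    rintro t ⟨δ, hδ, rfl⟩
    show g (-(y * ∑ j, w j * (x j + δ j))) ≤ g (s₀ + ε * S)
    rw [hLval δ]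
    apply hg_mono
    have h := hbc δ hδ
    have hb_le : -(y * ∑ j, w j * δ j) ≤ ε * S :=
      le_trans (le_abs_self _) (le_trans h.1 h.2)
    linarith
end
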